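/- arXiv:2412.02376 — 3 statements merged into one kernel-verified Lean document; each statement's English description precedes it below -/
import Mathlib

section
/- Define g₃(x) = log₂(e) − (2/x)·log₂(e)·arctan(x) + (1/x²)·log₂(1+x²) for x > 0. Then g₃ is monotonically increasing on (0, ∞). -/
/-! Up to the factor `log₂ e`, `g₃ x = 1 - 2 arctan x / x + log (1 + x²) / x²`, whose derivative is
`2 (x arctan x - log (1 + x²)) / x³`. The numerator vanishes at `0` and has derivative
`arctan x - x / (1 + x²)`, which in turn vanishes at `0` and has derivative `2x² / (1 + x²)²`;
two applications of "zero at `0` with positive derivative implies positive" finish the proof. -/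

open Real

noncomputable def g₃ (x : ℝ) : ℝ :=
  Real.logb 2 (Real.exp 1) - (2/x) * Real.logb 2 (Real.exp 1) * Real.arctan x
    + (1/x^2) * Real.logb 2 (1 + x^2)

lemma strictMonoOn_of_hasDerivAt_pos {D : Set ℝ} (hD : Convex ℝ D) {f f' : ℝ → ℝ}
    (hf : ∀ x ∈ D, HasDerivAt f (f' x) x) (hf' : ∀ x ∈ interior D, 0 < f' x) :
    StrictMonoOn f D :=
  strictMonoOn_of_hasDerivWithinAt_pos hD
    (fun x hx => (hf x hx).continuousAt.continuousWithinAt)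
    (fun x hx => (hf x (interior_subset hx)).hasDerivWithinAt) hf'

lemma pos_of_hasDerivAt_pos_of_map_zero {f f' : ℝ → ℝ} (hf : ∀ x, 0 ≤ x → HasDerivAt f (f' x) x)
    (hf₀ : f 0 = 0) (hf' : ∀ x, 0 < x → 0 < f' x) {x : ℝ} (hx : 0 < x) : 0 < f x := by
  have hmono : StrictMonoOn f (Set.Ici 0) :=
    strictMonoOn_of_hasDerivAt_pos (convex_Ici 0) hf (by simpa using hf')
  simpa [hf₀] using hmono Set.self_mem_Ici hx.le hx

lemma hasDerivAt_log_one_add_sq (x : ℝ) :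
    HasDerivAt (fun x => log (1 + x ^ 2)) (2 * x / (1 + x ^ 2)) x := by
  simpa using ((hasDerivAt_pow 2 x).const_add 1).log (by positivity)

lemma div_one_add_sq_lt_arctan {x : ℝ} (hx : 0 < x) : x / (1 + x ^ 2) < arctan x := by
  have hderiv (y : ℝ) : HasDerivAt (fun y => arctan y - y / (1 + y ^ 2))
      (2 * y ^ 2 / (1 + y ^ 2) ^ 2) y := by
    have hquot := (hasDerivAt_id' y).div ((hasDerivAt_pow 2 y).const_add 1)
      (by positivity : 1 + y ^ 2 ≠ 0)
    refine ((hasDerivAt_arctan y).sub hquot).congr_deriv ?_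
    field_simp
    ring
  exact sub_pos.1 <| pos_of_hasDerivAt_pos_of_map_zero (fun y _ => hderiv y) (by simp)
    (fun y hy => by positivity) hx

lemma log_one_add_sq_lt_mul_arctan {x : ℝ} (hx : 0 < x) : log (1 + x ^ 2) < x * arctan x := by
  have hderiv (y : ℝ) : HasDerivAt (fun y => y * arctan y - log (1 + y ^ 2))
      (arctan y - y / (1 + y ^ 2)) y := by
    refine ((hasDerivAt_id' y).mul (hasDerivAt_arctan y)).sub
      (hasDerivAt_log_one_add_sq y) |>.congr_deriv ?_
    field_simp
    ring
  exact sub_pos.1 <| pos_of_hasDerivAt_pos_of_map_zero (fun y _ => hderiv y) (by simp)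
    (fun y hy => sub_pos.2 (div_one_add_sq_lt_arctan hy)) hx

lemma hasDerivAt_one_sub_arctan_add_log {x : ℝ} (hx : x ≠ 0) :
    HasDerivAt (fun x => 1 - 2 * arctan x / x + log (1 + x ^ 2) / x ^ 2)
      (2 / x ^ 3 * (x * arctan x - log (1 + x ^ 2))) x := by
  have harctan := ((hasDerivAt_arctan x).const_mul 2).div (hasDerivAt_id' x) hx
  have hlog := (hasDerivAt_log_one_add_sq x).div (hasDerivAt_pow 2 x) (pow_ne_zero 2 hx)
  refine ((harctan.const_sub 1).add hlog).congr_deriv ?_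
  field_simp
  ring

lemma strictMonoOn_one_sub_arctan_add_log :
    StrictMonoOn (fun x => 1 - 2 * arctan x / x + log (1 + x ^ 2) / x ^ 2) (Set.Ioi 0) :=
  strictMonoOn_of_hasDerivAt_pos (convex_Ioi 0)
    (fun _ hx => hasDerivAt_one_sub_arctan_add_log (ne_of_gt hx))
    (fun x hx => by
      rw [interior_Ioi, Set.mem_Ioi] at hx
      exact mul_pos (by positivity) (sub_pos.2 (log_one_add_sq_lt_mul_arctan hx)))

lemma g₃_eq (x : ℝ) :
    g₃ x = logb 2 (exp 1) * (1 - 2 * arctan x / x + log (1 + x ^ 2) / x ^ 2) := by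
  simp only [g₃, logb, log_exp]
  ring

theorem stmt_3 : StrictMonoOn g₃ (Set.Ioi (0:ℝ)) := by
  have hlog₂e : 0 < logb 2 (exp 1) := logb_pos one_lt_two (one_lt_exp_iff.2 one_pos)
  intro a ha b hb hab
  rw [g₃_eq a, g₃_eq b]
  exact mul_lt_mul_of_pos_left (strictMonoOn_one_sub_arctan_add_log ha hb hab) hlog₂e
end

section
/- Define g₃(x) = log₂(e) − (2/x)·log₂(e)·arctan(x) + (1/x²)·log₂(1+x²) for x > 0. Then g₃(x) ≥ 0 for all x > 0, and lim_{x→0⁺} g₃(x) = 0. -/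
/-!
Since `log₂ e = 1 / log 2`, for `x ≠ 0` we have `g₃ x = N x / (x² log 2)` with
`N x = x² - 2x arctan x + log (1 + x²)` (`g₃Num` below). Now `N 0 = 0` and
`N' x = 2 (x - arctan x) ≥ 0` for `x ≥ 0`, so `N ≥ 0` on `[0, ∞)`. For the limit,
`N x / x² = 1 - 2 (arctan x / x) + log (1 + x²) / x²`, and both difference quotients tend to
the derivative `1` at `0`, giving `1 - 2 + 1 = 0`.
-/

open Real Filter

open Topology Set

namespace Real

theorem arctan_le_self {x : ℝ} (hx : 0 ≤ x) : arctan x ≤ x :=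
  (le_tan (arctan_nonneg.2 hx) (arctan_lt_pi_div_two x)).trans_eq (tan_arctan x)

theorem tendsto_arctan_div_self : Tendsto (fun x ↦ arctan x / x) (𝓝[≠] 0) (𝓝 1) := by
  have := (hasDerivAt_arctan 0).tendsto_slope_zero
  simpa [div_eq_inv_mul] using this

theorem tendsto_log_one_add_div_self : Tendsto (fun t ↦ log (1 + t) / t) (𝓝[≠] 0) (𝓝 1) := by
  have := (((hasDerivAt_id (0 : ℝ)).const_add 1).log (by norm_num)).tendsto_slope_zero
  simpa [div_eq_inv_mul] using this

end Real

theorem tendsto_sq_nhdsNE_zero : Tendsto (fun x : ℝ ↦ x ^ 2) (𝓝[≠] 0) (𝓝[≠] 0) := by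
  refine tendsto_nhdsWithin_iff.2 ⟨?_, ?_⟩
  · simpa using ((continuous_pow 2).tendsto (0 : ℝ)).mono_left nhdsWithin_le_nhds
  · filter_upwards [self_mem_nhdsWithin] with x hx using pow_ne_zero 2 hx

noncomputable def g₃Num (x : ℝ) : ℝ := x ^ 2 - 2 * x * arctan x + log (1 + x ^ 2)

theorem hasDerivAt_g₃Num (x : ℝ) : HasDerivAt g₃Num (2 * (x - arctan x)) x := by
  have hsq : HasDerivAt (fun y : ℝ ↦ y ^ 2) (2 * x) x := by simpa using hasDerivAt_pow 2 x
  have hlog := (hsq.const_add 1).log (by positivity)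
  have := (hsq.sub (((hasDerivAt_id x).const_mul 2).mul (hasDerivAt_arctan x))).add hlog
  refine this.congr_deriv ?_
  simp only [id]
  field_simp
  ring

theorem g₃Num_nonneg {x : ℝ} (hx : 0 ≤ x) : 0 ≤ g₃Num x := by
  have hmono : MonotoneOn g₃Num (Ici 0) := by
    refine monotoneOn_of_hasDerivWithinAt_nonneg (convex_Ici 0)
      (fun y _ ↦ (hasDerivAt_g₃Num y).continuousAt.continuousWithinAt)
      (fun y _ ↦ (hasDerivAt_g₃Num y).hasDerivWithinAt) fun y hy ↦ ?_
    rw [interior_Ici] at hy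
    linarith [arctan_le_self (le_of_lt hy)]
  simpa [g₃Num] using hmono self_mem_Ici hx hx

theorem tendsto_g₃Num_div_sq : Tendsto (fun x ↦ g₃Num x / x ^ 2) (𝓝[≠] 0) (𝓝 0) := by
  have hlim := (tendsto_const_nhds (x := (1 : ℝ))).sub (tendsto_arctan_div_self.const_mul 2)
    |>.add (tendsto_log_one_add_div_self.comp tendsto_sq_nhdsNE_zero)
  norm_num at hlim
  refine hlim.congr' ?_
  filter_upwards [self_mem_nhdsWithin] with x (hx : x ≠ 0)
  simp only [g₃Num]
  field_simp

theorem g₃_eq_g₃Num_div {x : ℝ} (hx : x ≠ 0) : g₃ x = g₃Num x / x ^ 2 / log 2 := by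
  simp only [g₃, g₃Num, logb, log_exp]
  field_simp

theorem stmt_4 :
    (∀ x : ℝ, 0 < x → 0 ≤ g₃ x) ∧
    Filter.Tendsto g₃ (nhdsWithin 0 (Set.Ioi 0)) (nhds 0) := by
  constructor
  · intro x hx
    rw [g₃_eq_g₃Num_div hx.ne']
    have := g₃Num_nonneg hx.le
    have := log_pos one_lt_two
    positivity
  · have hlim := (tendsto_g₃Num_div_sq.div_const (log 2)).mono_left (nhdsGT_le_nhdsNE 0)
    rw [zero_div] at hlim
    refine hlim.congr' ?_
    filter_upwards [self_mem_nhdsWithin] with x (hx : 0 < x)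
    exact (g₃_eq_g₃Num_div hx.ne').symm
end

section
/- Let r₁ > r₂ > 0 and ρ > 0. Define R_NOMA(ρ) = −log₂ α₂ + log₂(1 + ρ·α₂/(2r₂²)) with α₂ ∈ (0,1), and R_OMA(ρ) = (1/2)·log₂(1 + 4ρ/r₂²) + (1/2)·log₂(1 + 4ρ/r₁²). Then lim_{ρ→∞} (R_NOMA(ρ) − R_OMA(ρ)) = log₂(r₁/r₂) − 3. In particular the limit is positive whenever r₁ > 8·r₂. -/
/-! At high SNR each rate behaves like `logb 2 (ρ * a)`: `logb 2 (1 + ρ a) - logb 2 ρ → logb 2 a`.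
The weight of `logb 2 ρ` is `1` for NOMA and `1/2 + 1/2` for OMA, so the divergent parts cancel and
the gap tends to the difference of the constant terms, which simplifies to `logb 2 (r₁ / r₂) - 3`. -/

open Real Filter Topology

theorem tendsto_logb_one_add_mul_sub_logb (b : ℝ) {a : ℝ} (ha : a ≠ 0) :
    Tendsto (fun x => logb b (1 + x * a) - logb b x) atTop (𝓝 (logb b a)) := by
  have hlim : Tendsto (fun x : ℝ => x⁻¹ + a) atTop (𝓝 a) := by
    simpa using tendsto_inv_atTop_zero.add_const a
  refine ((continuousAt_logb ha).tendsto.comp hlim).congr' ?_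
  filter_upwards [eventually_gt_atTop 0, hlim.eventually_ne ha] with x hx hxa
  rw [Function.comp_apply, show 1 + x * a = x * (x⁻¹ + a) by field_simp, logb_mul hx.ne' hxa]
  ring

theorem neg_logb_add_logb_sub_half_logb_eq {α r₁ r₂ : ℝ} (hα : α ≠ 0) (h₁ : r₁ ≠ 0)
    (h₂ : r₂ ≠ 0) :
    -logb 2 α + logb 2 (α / (2 * r₂ ^ 2))
        - (1 / 2 * logb 2 (4 / r₂ ^ 2) + 1 / 2 * logb 2 (4 / r₁ ^ 2))
      = logb 2 (r₁ / r₂) - 3 := by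
  have h4 : log 4 = 2 * log 2 := by
    rw [show (4 : ℝ) = 2 ^ 2 by norm_num, log_pow]; norm_num
  have hl2 : log 2 ≠ 0 := by positivity
  simp only [logb]
  rw [log_div hα (by positivity), log_div (by norm_num) (by positivity),
    log_div (by norm_num) (by positivity), log_div h₁ h₂, log_mul (by norm_num) (by positivity),
    log_pow, log_pow, h4]
  field_simp
  ring

theorem stmt_14 (r₁ r₂ α₂ : ℝ) (h12 : r₂ < r₁) (h2 : 0 < r₂) (hα : α₂ ∈ Set.Ioo (0:ℝ) 1) :
    Filter.Tendsto
      (fun ρ : ℝ =>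
        (- Real.logb 2 α₂ + Real.logb 2 (1 + ρ * α₂ / (2 * r₂^2)))
          - ((1/2) * Real.logb 2 (1 + 4*ρ/r₂^2) + (1/2) * Real.logb 2 (1 + 4*ρ/r₁^2)))
      Filter.atTop (nhds (Real.logb 2 (r₁/r₂) - 3)) ∧
    (8 * r₂ < r₁ → 0 < Real.logb 2 (r₁/r₂) - 3) := by
  have h1 : 0 < r₁ := h2.trans h12
  constructor
  · have hNOMA := tendsto_logb_one_add_mul_sub_logb 2 (a := α₂ / (2 * r₂ ^ 2))
      (div_pos hα.1 (by positivity)).ne'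
    have hOMA₂ := tendsto_logb_one_add_mul_sub_logb 2 (a := 4 / r₂ ^ 2) (by positivity)
    have hOMA₁ := tendsto_logb_one_add_mul_sub_logb 2 (a := 4 / r₁ ^ 2) (by positivity)
    have hgap := (hNOMA.const_add (-logb 2 α₂)).sub
      ((hOMA₂.const_mul (1 / 2)).add (hOMA₁.const_mul (1 / 2)))
    rw [neg_logb_add_logb_sub_half_logb_eq hα.1.ne' h1.ne' h2.ne'] at hgap
    convert hgap using 2 with ρ
    rw [mul_div_assoc, mul_comm 4 ρ, mul_div_assoc, mul_div_assoc]
    ring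
  · intro h8
    have : 3 < logb 2 (r₁ / r₂) := by
      rw [lt_logb_iff_rpow_lt one_lt_two (div_pos h1 h2), lt_div_iff₀ h2]
      norm_num
      linarith
    linarith
end
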